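/- Let H be a complex Hilbert space and let M and N be closed subspaces of H. Then c_e(M,N)² = inf{‖P_N P_M P_N − P_{M∩N} + K‖ : K a compact operator on H}; that is, the square of the distance of P_M P_N − P_{M∩N} to the compact operators equals the distance of P_N P_M P_N − P_{M∩N} to the compact operators. -/

import Mathlib

/-- The orthogonal projection onto a subspace `K` of a complex inner product space,
as a bounded operator on the whole space (junk value `0` if `K` does not admit an
orthogonal projection; for a closed subspace of a Hilbert space it is the genuine
orthogonal projection). -/
noncomputable def proj {H : Type*} [NormedAddCommGroup H] [InnerProductSpace ℂ H]
    (K : Submodule ℂ H) : H →L[ℂ] H :=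
  letI := Classical.propDecidable (Submodule.HasOrthogonalProjection K)
  if h : Submodule.HasOrthogonalProjection K then
    haveI := h
    K.subtypeL.comp (Submodule.orthogonalProjection K)
  else 0

/-- The cosine of the essential Friedrichs angle between two (closed) subspaces `M`, `N`:
the infimum over compact operators `K` of `‖P_M P_N - P_{M ∩ N} + K‖`, i.e. the norm of
the class of `P_M P_N - P_{M ∩ N}` in the Calkin algebra. -/
noncomputable def essFriedrichs {H : Type*} [NormedAddCommGroup H] [InnerProductSpace ℂ H]
    (M N : Submodule ℂ H) : ℝ :=
  ⨅ K : {T : H →L[ℂ] H // IsCompactOperator ⇑T},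
    ‖proj M * proj N - proj (M ⊓ N) + (K : H →L[ℂ] H)‖

/-!
The Calkin algebra is a C⋆-algebra, so `‖[T]‖² = ‖[T⋆T]‖` for the class `[T]` of `T` modulo the
compact operators, and for `T = P_M P_N - P_{M ∩ N}` one has `T⋆T = P_N P_M P_N - P_{M ∩ N}`, since
`P_{M ∩ N}` is absorbed by `P_M` and `P_N` on either side. The C⋆-identity in the quotient is
proved by hand: `≤` because the compact operators form a self-adjoint ideal, `≥` because every
compact operator is almost annihilated by the projection onto the orthogonal complement of some
finite-dimensional subspace.
-/

theorem IsStarProjection.star_mul_self_mul_sub_of_le {R : Type*} [Ring R] [StarRing R]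
    {p q r : R} (hp : IsStarProjection p) (hq : IsSelfAdjoint q) (hr : IsStarProjection r)
    (hrp : r * p = r) (hrq : r * q = r) :
    star (p * q - r) * (p * q - r) = q * p * q - r := by
  have hpr : p * r = r := by
    simpa only [star_mul, hp.isSelfAdjoint.star_eq, hr.isSelfAdjoint.star_eq] using
      congrArg star hrp
  have hqr : q * r = r := by
    simpa only [star_mul, hq.star_eq, hr.isSelfAdjoint.star_eq] using congrArg star hrq
  rw [star_sub, star_mul, hp.isSelfAdjoint.star_eq, hq.star_eq, hr.isSelfAdjoint.star_eq]
  calc (q * p - r) * (p * q - r)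
      = q * (p * p) * q - q * (p * r) - r * p * q + r * r := by noncomm_ring
    _ = q * p * q - r := by
      rw [hp.isIdempotentElem.eq, hr.isIdempotentElem.eq, hpr, hqr, hrp, hrq]
      abel

section

open ContinuousLinearMap

variable {𝕜 E : Type*} [RCLike 𝕜] [NormedAddCommGroup E] [InnerProductSpace 𝕜 E]

theorem isCompactOperator_starProjection (F : Submodule 𝕜 E) [FiniteDimensional 𝕜 F] :
    IsCompactOperator F.starProjection :=
  (isCompactOperator_of_locallyCompactSpace_dom F.orthogonalProjectionOnto).clm_comp F.subtypeL

/-- Project onto the span of a finite `ε`-net of the image of the unit ball. -/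
theorem IsCompactOperator.exists_norm_starProjection_orthogonal_mul_le {k : E →L[𝕜] E}
    (hk : IsCompactOperator k) {ε : ℝ} (hε : 0 < ε) :
    ∃ (F : Submodule 𝕜 E) (_ : FiniteDimensional 𝕜 F), ‖Fᗮ.starProjection * k‖ ≤ ε := by
  obtain ⟨C, hC, himg⟩ := hk.image_closedBall_subset_compact 1
  obtain ⟨t, ht, hnet⟩ := Metric.totallyBounded_iff.1 hC.totallyBounded ε hε
  have : FiniteDimensional 𝕜 (Submodule.span 𝕜 t) := FiniteDimensional.span_of_finite 𝕜 ht
  refine ⟨Submodule.span 𝕜 t, this, opNorm_le_of_unit_norm hε.le fun x hx => ?_⟩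
  obtain ⟨y, hyt, hy⟩ := Set.mem_iUnion₂.1 <| hnet <| himg ⟨x, by simp [hx], rfl⟩
  have hy0 : (Submodule.span 𝕜 t)ᗮ.starProjection y = 0 :=
    Submodule.starProjection_orthogonal_apply_eq_zero (Submodule.subset_span hyt)
  calc ‖(Submodule.span 𝕜 t)ᗮ.starProjection (k x)‖
      = ‖(Submodule.span 𝕜 t)ᗮ.starProjection (k x - y)‖ := by rw [map_sub, hy0, sub_zero]
    _ ≤ ‖k x - y‖ := Submodule.norm_starProjection_apply_le _ _
    _ ≤ ε := (mem_ball_iff_norm.1 hy).le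

theorem IsCompactOperator.star [CompleteSpace E] {k : E →L[𝕜] E} (hk : IsCompactOperator k) :
    IsCompactOperator ⇑(Star.star k) := by
  refine isClosed_setOfPred_isCompactOperator.closure_subset <|
    Metric.mem_closure_iff.2 fun ε hε => ?_
  obtain ⟨F, hF, hnorm⟩ := hk.exists_norm_starProjection_orthogonal_mul_le (half_pos hε)
  refine ⟨Star.star k * F.starProjection,
    (isCompactOperator_starProjection F).clm_comp (Star.star k), ?_⟩
  have : Star.star k - Star.star k * F.starProjection =
      Star.star (Fᗮ.starProjection * k) := by
    rw [star_mul, (isSelfAdjoint_starProjection _).star_eq, Submodule.starProjection_orthogonal',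
      mul_sub, mul_one]
  rw [dist_eq_norm, this]
  exact (norm_star _).trans_lt (hnorm.trans_lt (half_lt_self hε))

noncomputable def essNorm (T : E →L[𝕜] E) : ℝ :=
  ⨅ K : {T : E →L[𝕜] E // IsCompactOperator ⇑T}, ‖T + (K : E →L[𝕜] E)‖

instance : Nonempty {T : E →L[𝕜] E // IsCompactOperator ⇑T} :=
  ⟨⟨0, isCompactOperator_zero⟩⟩

theorem essNorm_nonneg (T : E →L[𝕜] E) : 0 ≤ essNorm T :=
  le_ciInf fun _ => norm_nonneg _

theorem essNorm_le_norm_add (T : E →L[𝕜] E) {k : E →L[𝕜] E} (hk : IsCompactOperator k) :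
    essNorm T ≤ ‖T + k‖ :=
  ciInf_le (f := fun K : {S : E →L[𝕜] E // IsCompactOperator ⇑S} => ‖T + (K : E →L[𝕜] E)‖)
    ⟨0, Set.forall_mem_range.2 fun _ => norm_nonneg _⟩ ⟨k, hk⟩

theorem le_essNorm {T : E →L[𝕜] E} {c : ℝ}
    (h : ∀ k : E →L[𝕜] E, IsCompactOperator k → c ≤ ‖T + k‖) : c ≤ essNorm T :=
  le_ciInf fun K => h K.1 K.2

variable [CompleteSpace E]

theorem essNorm_star_mul_self_le (T : E →L[𝕜] E) : essNorm (star T * T) ≤ essNorm T ^ 2 := by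
  suffices h : √(essNorm (star T * T)) ≤ essNorm T by
    simpa [Real.sq_sqrt (essNorm_nonneg _)] using pow_le_pow_left₀ (Real.sqrt_nonneg _) h 2
  refine le_essNorm fun k hk => (Real.sqrt_le_left (norm_nonneg _)).2 ?_
  have hc : IsCompactOperator ⇑(star T * k + star k * T + star k * k) :=
    ((hk.clm_comp (star T)).add (hk.star.comp_clm T)).add (hk.star.comp_clm k)
  calc essNorm (star T * T) ≤ ‖star T * T + (star T * k + star k * T + star k * k)‖ :=
        essNorm_le_norm_add _ hc
    _ = ‖star (T + k) * (T + k)‖ := by rw [star_add]; noncomm_ring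
    _ = ‖T + k‖ * ‖T + k‖ := CStarRing.norm_star_mul_self
    _ = ‖T + k‖ ^ 2 := (sq _).symm

/-- Cut `T` down by the projection `q` onto the orthogonal complement of a finite-dimensional
subspace nearly annihilating `k`: then `‖T q‖² = ‖q T⋆T q‖ ≈ ‖q (T⋆T + k) q‖ ≤ ‖T⋆T + k‖`. -/
theorem sq_essNorm_le_essNorm_star_mul_self (T : E →L[𝕜] E) :
    essNorm T ^ 2 ≤ essNorm (star T * T) := by
  refine le_essNorm fun k hk => le_of_forall_pos_le_add fun ε hε => ?_
  obtain ⟨F, hF, hnorm⟩ := hk.exists_norm_starProjection_orthogonal_mul_le hε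
  set q := Fᗮ.starProjection with hq_def
  have hq : ‖q‖ ≤ 1 := Submodule.starProjection_norm_le _
  have hq_star : star q = q := (isSelfAdjoint_starProjection _).star_eq
  have hTq : essNorm T ≤ ‖T * q‖ := by
    have hcpt : IsCompactOperator ⇑(-(T * F.starProjection)) :=
      ((isCompactOperator_starProjection F).clm_comp T).neg
    calc essNorm T ≤ ‖T + -(T * F.starProjection)‖ := essNorm_le_norm_add T hcpt
      _ = ‖T * q‖ := by
        rw [hq_def, Submodule.starProjection_orthogonal', mul_sub, mul_one, sub_eq_add_neg]
  have hcompress (a : E →L[𝕜] E) : ‖q * a * q‖ ≤ ‖a‖ :=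
    calc ‖q * a * q‖ ≤ ‖q‖ * ‖a‖ * ‖q‖ := norm_mul₃_le
      _ ≤ 1 * ‖a‖ * 1 := by gcongr
      _ = ‖a‖ := by ring
  calc essNorm T ^ 2 ≤ ‖T * q‖ ^ 2 := pow_le_pow_left₀ (essNorm_nonneg T) hTq 2
    _ = ‖q * (star T * T + k) * q - q * k * q‖ := by
      rw [sq, ← CStarRing.norm_star_mul_self, star_mul, hq_star]
      congr 1
      noncomm_ring
    _ ≤ ‖q * (star T * T + k) * q‖ + ‖q * k * q‖ := norm_sub_le _ _
    _ ≤ ‖star T * T + k‖ + ε := by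
      refine add_le_add (hcompress _) ?_
      calc ‖q * k * q‖ ≤ ‖q * k‖ * ‖q‖ := norm_mul_le _ _
        _ ≤ ε * 1 := by gcongr
        _ = ε := mul_one ε

theorem essNorm_star_mul_self (T : E →L[𝕜] E) : essNorm (star T * T) = essNorm T ^ 2 :=
  (essNorm_star_mul_self_le T).antisymm (sq_essNorm_le_essNorm_star_mul_self T)

end

theorem proj_eq_starProjection {H : Type*} [NormedAddCommGroup H] [InnerProductSpace ℂ H]
    (K : Submodule ℂ H) [K.HasOrthogonalProjection] : proj K = K.starProjection :=
  dif_pos ‹_›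

theorem stmt3 {H : Type*} [NormedAddCommGroup H] [InnerProductSpace ℂ H] [CompleteSpace H]
    (M N : Submodule ℂ H) (hM : IsClosed (M : Set H)) (hN : IsClosed (N : Set H)) :
    essFriedrichs M N ^ 2 =
      ⨅ K : {T : H →L[ℂ] H // IsCompactOperator ⇑T},
        ‖proj N * proj M * proj N - proj (M ⊓ N) + (K : H →L[ℂ] H)‖ := by
  have : CompleteSpace M := hM.completeSpace_coe
  have : CompleteSpace N := hN.completeSpace_coe
  have : CompleteSpace ↥(M ⊓ N) := (hM.inter hN).completeSpace_coe
  change essNorm (proj M * proj N - proj (M ⊓ N)) ^ 2 =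
    essNorm (proj N * proj M * proj N - proj (M ⊓ N))
  simp only [proj_eq_starProjection]
  rw [← essNorm_star_mul_self, IsStarProjection.star_mul_self_mul_sub_of_le
    isStarProjection_starProjection (isSelfAdjoint_starProjection N) isStarProjection_starProjection
    (Submodule.starProjection_comp_starProjection_of_le inf_le_left)
    (Submodule.starProjection_comp_starProjection_of_le inf_le_right)]
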